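/- Let W be a complete discrete valuation ring of characteristic p with uniformizer μ, algebraically closed residue field and normalized valuation ν. Let q = p^e, r ≥ 2, t ∈ W, and g_1, …, g_{r−1}, g'_1, …, g'_{r−1} ∈ W. Set φ = tX + Σ_{i=1}^{r−1} g_i X^{q^i} + X^{q^r} and φ' = tX + Σ_{i=1}^{r−1} g'_i X^{q^i} + X^{q^r} in W[X]. For n ≥ 1 let Iso_n be the set of q-polynomials u over W/(μ^n) that are compositional units and satisfy u∘φ̄ = φ̄'∘u (bars denoting reduction of coefficients modulo μ^n). Then for all nonnegative integers δ_1, …, δ_{r−1} and every positive integer δ_r with Σ_{i=1}^{r−1} δ_i(q^i−1) = δ_r(q^r−1), one has in ℕ∪{∞}: (q^r−1)·ν(g_1^{δ_1}⋯g_{r−1}^{δ_{r−1}} − (g'_1)^{δ_1}⋯(g'_{r−1})^{δ_{r−1}}) ≥ Σ_{n≥1} #Iso_n. -/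

import Mathlib

/-- A `q`-polynomial: all nonzero coefficients sit in degrees that are powers of `q`. -/
def IsqPoly (q : ℕ) {R : Type*} [Semiring R] (f : Polynomial R) : Prop :=
  ∀ n ∈ f.support, ∃ i : ℕ, n = q ^ i

/-- The set of isomorphisms from `φ` to `ψ` over `R`: `q`-polynomials that are
compositional units and intertwine `φ` and `ψ`. -/
def IsoSet (q : ℕ) {R : Type*} [CommRing R] (φ ψ : Polynomial R) : Set (Polynomial R) :=
  {u | IsqPoly q u ∧
    (∃ v : Polynomial R, IsqPoly q v ∧ u.comp v = Polynomial.X ∧ v.comp u = Polynomial.X) ∧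
    u.comp φ = ψ.comp u}

/-!
An isomorphism `u : φ ≅ φ'` over `W/μⁿ` reduces to a degree-one polynomial over the residue field,
so its coefficients beyond the linear one are nilpotent. Comparing coefficients of
`u ∘ φ = φ' ∘ u`, the highest of them, `x`, satisfies `x = x ^ q ^ r`, hence vanishes. So `u = c X`
with `c ^ (q ^ r - 1) = 1` and `g i = g' i * c ^ (q ^ i - 1)`, and the degree condition on `δ`
makes the `J`-invariants agree modulo `μⁿ`. As `q ^ r - 1` is prime to `p`, `c` is determined by
its residue, a `(q ^ r - 1)`-th root of unity in the residue field. Hence `Iso_n` is empty unless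
`μⁿ` divides the difference of the `J`-invariants, and has at most `q ^ r - 1` elements.
-/

open Polynomial Finset

theorem IsNilpotent.eq_zero_of_eq_pow {S : Type*} [CommRing S] {x : S} (hx : IsNilpotent x)
    {s : ℕ} (hs : 2 ≤ s) (h : x = x ^ s) : x = 0 := by
  have hunit : IsUnit (1 - x ^ (s - 1)) := (hx.pow_of_pos (by omega)).isUnit_one_sub
  refine hunit.mul_left_eq_zero.mp ?_
  rw [mul_sub, mul_one, ← pow_succ', Nat.sub_add_cancel (by omega), ← h, sub_self]

theorem prod_pow_eq_of_eq_mul_pow {ι M : Type*} [CommMonoid M] {s : Finset ι} {g g' : ι → M}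
    {c : M} {d δ : ι → ℕ} {m k : ℕ} (hc : c ^ m = 1) (hg : ∀ i ∈ s, g i = g' i * c ^ d i)
    (hδ : ∑ i ∈ s, δ i * d i = k * m) :
    ∏ i ∈ s, g i ^ δ i = ∏ i ∈ s, g' i ^ δ i := by
  calc ∏ i ∈ s, g i ^ δ i = ∏ i ∈ s, (g' i ^ δ i * c ^ (δ i * d i)) :=
        prod_congr rfl fun i hi => by rw [hg i hi, mul_pow, ← pow_mul, mul_comm (d i)]
    _ = (∏ i ∈ s, g' i ^ δ i) * (c ^ m) ^ k := by
        rw [prod_mul_distrib, prod_pow_eq_pow_sum, hδ, ← pow_mul, mul_comm k]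
    _ = ∏ i ∈ s, g' i ^ δ i := by rw [hc, one_pow, mul_one]

theorem natDegree_eq_one_of_comp_eq_X {K : Type*} [CommRing K] [IsDomain K] {u v : K[X]}
    (h : v.comp u = X) : u.natDegree = 1 :=
  Nat.eq_one_of_mul_eq_one_left (by rw [← natDegree_comp, h, natDegree_X])

theorem card_filter_Icc_le {P : ℕ → Prop} [DecidablePred P] {a : ℕ∞}
    (h : ∀ n, P n → (n : ℕ∞) ≤ a) (N : ℕ) : (((Icc 1 N).filter P).card : ℕ∞) ≤ a := by
  induction a using ENat.recTopCoe with
  | top => exact le_top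
  | coe M =>
    rw [Nat.cast_le]
    calc _ ≤ (Icc 1 M).card := card_le_card fun n hn => by
            simp only [mem_filter, mem_Icc] at hn ⊢
            have := Nat.cast_le.mp (h n hn.2)
            omega
      _ = M := by simp

theorem IsLocalRing.eq_of_pow_eq_one_of_residue_eq {R : Type*} [CommRing R] [IsLocalRing R]
    {m : ℕ} (hm : IsUnit (m : R)) {c c' : R} (hc : c ^ m = 1) (hc' : c' ^ m = 1)
    (h : residue R c = residue R c') : c = c' := by
  have hm0 : m ≠ 0 := by rintro rfl; simp at hm
  set S := ∑ i ∈ range m, c ^ i * c' ^ (m - 1 - i)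
  have hS : S * (c - c') = 0 := by rw [geom_sum₂_mul, hc, hc', sub_self]
  have hresS : residue R S = residue R (m * c ^ (m - 1)) := by
    simp only [S, map_sum, map_mul, map_pow, map_natCast, ← h, ← pow_add]
    rw [sum_congr rfl fun i hi => by rw [Nat.add_sub_cancel' (by simp at hi; omega)]]
    simp
  have hSunit : IsUnit S := by
    rw [← residue_ne_zero_iff_isUnit, hresS, residue_ne_zero_iff_isUnit]
    exact hm.mul ((IsUnit.of_pow_eq_one hc hm0).pow _)
  exact sub_eq_zero.mp (hSunit.mul_right_eq_zero.mp hS)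

section QPolynomial

variable {R : Type*} [CommRing R] {p : ℕ} [hp : Fact p.Prime] [CharP R p] {e : ℕ}

theorem coeff_pow_prime_pow (f : R[X]) (s d : ℕ) :
    (f ^ p ^ s).coeff d = if p ^ s ∣ d then f.coeff (d / p ^ s) ^ p ^ s else 0 := by
  rw [← map_iterateFrobenius_expand, coeff_map, coeff_expand (pow_pos hp.out.pos s)]
  split_ifs <;> simp [iterateFrobenius_def, hp.out.ne_zero]

theorem coeff_pow_qpow_qpow (he : 0 < e) (f : R[X]) (j m : ℕ) :
    (f ^ (p ^ e) ^ j).coeff ((p ^ e) ^ m) =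
      if j ≤ m then f.coeff ((p ^ e) ^ (m - j)) ^ (p ^ e) ^ j else 0 := by
  simp only [← pow_mul, coeff_pow_prime_pow,
    Nat.pow_dvd_pow_iff_le_right hp.out.one_lt, Nat.mul_le_mul_left_iff he]
  split_ifs with hjm
  · rw [Nat.pow_div (Nat.mul_le_mul_left e hjm) hp.out.pos, Nat.mul_sub]
  · rfl

theorem IsqPoly.coeff_comp_qpow (he : 0 < e) {f : R[X]} (hf : IsqPoly (p ^ e) f) (h : R[X])
    (m : ℕ) :
    (f.comp h).coeff ((p ^ e) ^ m) =
      ∑ j ∈ range (m + 1),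
        f.coeff ((p ^ e) ^ j) * h.coeff ((p ^ e) ^ (m - j)) ^ (p ^ e) ^ j := by
  have hq : 1 < p ^ e := Nat.one_lt_pow he.ne' hp.out.one_lt
  set F : ℕ → R := fun n => f.coeff n * (h ^ n).coeff ((p ^ e) ^ m)
  set S := (range (m + 1)).image ((p ^ e) ^ ·)
  have hS : ∑ n ∈ S, F n = ∑ n ∈ f.support ∪ S, F n := by
    refine sum_subset subset_union_right fun n hn hnS => ?_
    obtain ⟨j, rfl⟩ := hf n ((mem_union.mp hn).resolve_right hnS)
    have hmj : ¬ j ≤ m := fun hjm => hnS (mem_image_of_mem _ (mem_range_succ_iff.mpr hjm))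
    simp only [F, coeff_pow_qpow_qpow he, if_neg hmj, mul_zero]
  have hsupp : ∑ n ∈ f.support, F n = ∑ n ∈ f.support ∪ S, F n :=
    sum_subset subset_union_left fun n _ hn => by simp [F, notMem_support_iff.mp hn]
  rw [comp_eq_sum_left, sum_def, finsetSum_coeff]
  simp_rw [coeff_C_mul]
  rw [hsupp, ← hS, sum_image fun _ _ _ _ hij => Nat.pow_right_injective hq hij]
  refine sum_congr rfl fun j hj => ?_
  simp only [F, coeff_pow_qpow_qpow he, if_pos (mem_range_succ_iff.mp hj)]

end QPolynomial

section DrinfeldPoly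

variable {R : Type*} [CommRing R]

/-- `φ_T = t τ⁰ + g₁ τ + ⋯ + g_{r-1} τ^(r-1) + τ^r`, written as a `q`-polynomial. -/
noncomputable def drinfeldPoly (q r : ℕ) (t : R) (g : ℕ → R) : R[X] :=
  C t * X + (∑ i ∈ Icc 1 (r - 1), C (g i) * X ^ q ^ i) + X ^ q ^ r

theorem map_drinfeldPoly {S : Type*} [CommRing S] (f : R →+* S) (q r : ℕ) (t : R) (g : ℕ → R) :
    (drinfeldPoly q r t g).map f = drinfeldPoly q r (f t) (f ∘ g) := by
  simp [drinfeldPoly, Polynomial.map_sum]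

theorem coeff_drinfeldPoly_qpow {q r : ℕ} (hq : 1 < q) (hr : 0 < r) (t : R) (g : ℕ → R) (k : ℕ) :
    (drinfeldPoly q r t g).coeff (q ^ k) =
      if k = 0 then t else if k < r then g k else if k = r then 1 else 0 := by
  have hinj := Nat.pow_right_injective hq
  simp only [drinfeldPoly, coeff_add, coeff_C_mul_X, finsetSum_coeff, coeff_C_mul_X_pow,
    coeff_X_pow, hinj.eq_iff, Nat.pow_eq_one, hq.ne', false_or, sum_ite_eq, mem_Icc]
  split_ifs <;> first | omega | simp

theorem isqPoly_drinfeldPoly (q r : ℕ) (t : R) (g : ℕ → R) :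
    IsqPoly q (drinfeldPoly q r t g) := by
  intro n hn
  by_contra! hne
  apply mem_support_iff.mp hn
  have hn1 : n ≠ 1 := by simpa using hne 0
  simp [drinfeldPoly, finsetSum_coeff, coeff_X, coeff_X_pow, hne, hn1.symm]

variable {r : ℕ} {t : R} {g g' : ℕ → R}

theorem drinfeldPoly_coeff_mul_eq_of_comp_C_mul_X {q : ℕ} {c : R}
    (hcomm : (C c * X).comp (drinfeldPoly q r t g) = (drinfeldPoly q r t g').comp (C c * X))
    (n : ℕ) :
    c * (drinfeldPoly q r t g).coeff n = (drinfeldPoly q r t g').coeff n * c ^ n := by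
  simpa [mul_comp] using congrArg (coeff · n) hcomm

theorem pow_eq_one_and_eq_mul_pow_of_comp_C_mul_X {q : ℕ} (hq : 1 < q) (hr : 0 < r) {c : R}
    (hc : IsUnit c)
    (hcomm : (C c * X).comp (drinfeldPoly q r t g) = (drinfeldPoly q r t g').comp (C c * X)) :
    c ^ (q ^ r - 1) = 1 ∧ ∀ i ∈ Icc 1 (r - 1), g i = g' i * c ^ (q ^ i - 1) := by
  have hcoeff k := drinfeldPoly_coeff_mul_eq_of_comp_C_mul_X hcomm (q ^ k)
  simp only [coeff_drinfeldPoly_qpow hq hr] at hcoeff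
  have hpow k : c ^ q ^ k = c ^ (q ^ k - 1) * c := by
    rw [← pow_succ, Nat.sub_add_cancel (Nat.one_le_pow _ _ (by omega))]
  constructor
  · refine hc.mul_right_cancel ?_
    simpa [hr.ne', hpow] using (hcoeff r).symm
  · intro i hi
    rw [mem_Icc] at hi
    refine hc.mul_right_cancel ?_
    simpa [show i ≠ 0 by omega, show i < r by omega, hpow, mul_comm c, mul_assoc]
      using hcoeff i

variable {p : ℕ} [hp : Fact p.Prime] [CharP R p] {e : ℕ} {u : R[X]}

theorem IsqPoly.coeff_qpow_eq_pow_of_comp_drinfeldPoly (he : 0 < e) (hr : 0 < r)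
    (hu : IsqPoly (p ^ e) u)
    (hcomm : u.comp (drinfeldPoly (p ^ e) r t g) = (drinfeldPoly (p ^ e) r t g').comp u)
    {j : ℕ} (habove : ∀ k, j < k → u.coeff ((p ^ e) ^ k) = 0) :
    u.coeff ((p ^ e) ^ j) = u.coeff ((p ^ e) ^ j) ^ (p ^ e) ^ r := by
  have hq : 1 < p ^ e := Nat.one_lt_pow he.ne' hp.out.one_lt
  have hq0 : ∀ i, (0 : R) ^ (p ^ e) ^ i = 0 := fun i => zero_pow (pow_ne_zero _ (by omega))
  -- at `X ^ q ^ (j + r)` only `u_j * 1` survives on the left and `1 * u_j ^ q ^ r` on the right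
  have h := congrArg (coeff · ((p ^ e) ^ (j + r))) hcomm
  simp only [hu.coeff_comp_qpow he, (isqPoly_drinfeldPoly _ _ _ _).coeff_comp_qpow he,
    coeff_drinfeldPoly_qpow hq hr] at h
  rw [sum_eq_single_of_mem j (by simp) fun k _ hkj => ?_,
    sum_eq_single_of_mem r (by simp) fun i hi hir => ?_] at h
  · simpa [hr.ne'] using h
  · rcases lt_or_gt_of_ne hir with hir | hri
    · simp [habove (j + r - i) (by omega), hq0]
    · simp [show i ≠ 0 by omega, show ¬ i < r by omega, hir]
  · rcases lt_or_gt_of_ne hkj with hkj | hjk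
    · simp [show j + r - k ≠ 0 by omega, show ¬ j + r - k < r by omega,
        show j + r - k ≠ r by omega, hq0]
    · simp [habove k hjk]

theorem IsqPoly.eq_C_mul_X_of_comp_drinfeldPoly (he : 0 < e) (hr : 0 < r)
    (hu : IsqPoly (p ^ e) u)
    (hcomm : u.comp (drinfeldPoly (p ^ e) r t g) = (drinfeldPoly (p ^ e) r t g').comp u)
    (hnil : ∀ j, 0 < j → IsNilpotent (u.coeff ((p ^ e) ^ j))) :
    u = C (u.coeff 1) * X := by
  have hq : 1 < p ^ e := Nat.one_lt_pow he.ne' hp.out.one_lt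
  have hqr : 2 ≤ (p ^ e) ^ r := Nat.one_lt_pow hr.ne' hq
  -- downward induction on `j`, starting above the degree of `u`
  have hvanish : ∀ k j, 0 < j → u.natDegree < j + k → u.coeff ((p ^ e) ^ j) = 0 := by
    intro k
    induction k with
    | zero =>
      exact fun j _ hj => coeff_eq_zero_of_natDegree_lt (hj.trans (Nat.lt_pow_self hq))
    | succ k ih =>
      intro j hj hdeg
      refine (hnil j hj).eq_zero_of_eq_pow hqr ?_
      exact hu.coeff_qpow_eq_pow_of_comp_drinfeldPoly he hr hcomm fun k' hk' =>
        ih k' (by omega) (by omega)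
  ext n
  rw [coeff_C_mul_X]
  split_ifs with hn
  · rw [hn]
  by_contra hne
  obtain ⟨j, rfl⟩ := hu n (mem_support_iff.mpr hne)
  have hj : 0 < j := Nat.pos_of_ne_zero fun hj => hn (by simp [hj])
  exact hne (hvanish (u.natDegree + 1) j hj (by omega))

end DrinfeldPoly

section LocalRing

open IsLocalRing

variable {R : Type*} [CommRing R] [IsLocalRing R] {p : ℕ} [hp : Fact p.Prime] [CharP R p]
  {e r : ℕ} {t : R} {g g' : ℕ → R} {u : R[X]}

theorem eq_C_mul_X_of_mem_isoSet (hnil : maximalIdeal R ≤ nilradical R) (he : 0 < e)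
    (hr : 0 < r)
    (hu : u ∈ IsoSet (p ^ e) (drinfeldPoly (p ^ e) r t g) (drinfeldPoly (p ^ e) r t g')) :
    IsUnit (u.coeff 1) ∧ u = C (u.coeff 1) * X := by
  obtain ⟨hqu, ⟨v, -, -, hvu⟩, hcomm⟩ := hu
  have hq : 1 < p ^ e := Nat.one_lt_pow he.ne' hp.out.one_lt
  have hdeg : (u.map (residue R)).natDegree = 1 :=
    natDegree_eq_one_of_comp_eq_X (v := v.map (residue R)) (by rw [← map_comp, hvu, map_X])
  have hunit : IsUnit (u.coeff 1) := by
    rw [← residue_ne_zero_iff_isUnit, ← coeff_map, ← hdeg]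
    exact leadingCoeff_ne_zero.mpr (ne_zero_of_natDegree_gt (n := 0) (by omega))
  refine ⟨hunit, hqu.eq_C_mul_X_of_comp_drinfeldPoly he hr hcomm fun j hj => ?_⟩
  refine mem_nilradical.mp (hnil ((residue_eq_zero_iff _).mp ?_))
  rw [← coeff_map]
  exact coeff_eq_zero_of_natDegree_lt (hdeg ▸ Nat.one_lt_pow hj.ne' hq)

theorem pow_eq_one_and_eq_mul_pow_of_mem_isoSet (hnil : maximalIdeal R ≤ nilradical R)
    (he : 0 < e) (hr : 0 < r)
    (hu : u ∈ IsoSet (p ^ e) (drinfeldPoly (p ^ e) r t g) (drinfeldPoly (p ^ e) r t g')) :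
    u.coeff 1 ^ ((p ^ e) ^ r - 1) = 1 ∧
      ∀ i ∈ Icc 1 (r - 1), g i = g' i * u.coeff 1 ^ ((p ^ e) ^ i - 1) := by
  obtain ⟨hunit, hux⟩ := eq_C_mul_X_of_mem_isoSet hnil he hr hu
  exact pow_eq_one_and_eq_mul_pow_of_comp_C_mul_X (t := t)
    (Nat.one_lt_pow he.ne' hp.out.one_lt) hr hunit (hux ▸ hu.2.2)

theorem prod_pow_eq_of_mem_isoSet (hnil : maximalIdeal R ≤ nilradical R) (he : 0 < e)
    (hr : 0 < r)
    (hu : u ∈ IsoSet (p ^ e) (drinfeldPoly (p ^ e) r t g) (drinfeldPoly (p ^ e) r t g'))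
    {δ : ℕ → ℕ} {δr : ℕ}
    (hδ : ∑ i ∈ Icc 1 (r - 1), δ i * ((p ^ e) ^ i - 1) = δr * ((p ^ e) ^ r - 1)) :
    ∏ i ∈ Icc 1 (r - 1), g i ^ δ i = ∏ i ∈ Icc 1 (r - 1), g' i ^ δ i :=
  have hrel := pow_eq_one_and_eq_mul_pow_of_mem_isoSet hnil he hr hu
  prod_pow_eq_of_eq_mul_pow hrel.1 hrel.2 hδ

theorem encard_isoSet_drinfeldPoly_le (hnil : maximalIdeal R ≤ nilradical R) (he : 0 < e)
    (hr : 0 < r) :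
    (IsoSet (p ^ e) (drinfeldPoly (p ^ e) r t g) (drinfeldPoly (p ^ e) r t g')).encard ≤
      ((p ^ e) ^ r - 1 : ℕ) := by
  classical
  set m := (p ^ e) ^ r - 1
  have hm : 0 < m :=
    Nat.sub_pos_of_lt (Nat.one_lt_pow hr.ne' (Nat.one_lt_pow he.ne' hp.out.one_lt))
  have hmunit : IsUnit (m : R) := by
    have hq0 : (((p ^ e) ^ r : ℕ) : R) = 0 := by
      rw [← pow_mul, Nat.cast_pow, CharP.cast_eq_zero, zero_pow (by positivity)]
    simp [m, Nat.cast_sub (Nat.one_le_pow _ _ (pow_pos hp.out.pos e)), hq0]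
  have hinj : Set.InjOn (fun u : R[X] => residue R (u.coeff 1))
      (IsoSet (p ^ e) (drinfeldPoly (p ^ e) r t g) (drinfeldPoly (p ^ e) r t g')) := by
    intro u hu u' hu' h
    rw [(eq_C_mul_X_of_mem_isoSet hnil he hr hu).2, (eq_C_mul_X_of_mem_isoSet hnil he hr hu').2,
      eq_of_pow_eq_one_of_residue_eq hmunit
        (pow_eq_one_and_eq_mul_pow_of_mem_isoSet hnil he hr hu).1
        (pow_eq_one_and_eq_mul_pow_of_mem_isoSet hnil he hr hu').1 h]
  calc _ = (_ '' _).encard := hinj.encard_image.symm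
    _ ≤ ((nthRootsFinset m (1 : ResidueField R) : Set (ResidueField R))).encard := by
        refine Set.encard_le_encard ?_
        rintro _ ⟨u, hu, rfl⟩
        rw [Finset.mem_coe, mem_nthRootsFinset hm, ← map_pow,
          (pow_eq_one_and_eq_mul_pow_of_mem_isoSet hnil he hr hu).1, map_one]
    _ ≤ m := by
        rw [Set.encard_coe_eq_coe_finsetCard, Nat.cast_le]
        exact (Multiset.toFinset_card_le _).trans (card_nthRoots _ _)

end LocalRing

section DVR

open IsLocalRing

variable {W : Type*} [CommRing W] [IsDomain W] [IsDiscreteValuationRing W] {μ : W} {n : ℕ}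

theorem isLocalRing_quotient_span_pow (hμ : Irreducible μ) (hn : n ≠ 0) :
    IsLocalRing (W ⧸ Ideal.span {μ ^ n}) := by
  have : Nontrivial (W ⧸ Ideal.span {μ ^ n}) := Ideal.Quotient.nontrivial_iff.mpr <| by
    rw [Ne, Ideal.span_singleton_eq_top, isUnit_pow_iff hn]
    exact hμ.not_isUnit
  exact .of_surjective' _ Ideal.Quotient.mk_surjective

theorem maximalIdeal_quotient_span_pow_le_nilradical (hμ : Irreducible μ)
    [IsLocalRing (W ⧸ Ideal.span {μ ^ n})] :
    maximalIdeal (W ⧸ Ideal.span {μ ^ n}) ≤ nilradical (W ⧸ Ideal.span {μ ^ n}) := by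
  intro x hx
  obtain ⟨w, rfl⟩ := Ideal.Quotient.mk_surjective x
  have hw : w ∈ maximalIdeal W := fun hw => hx (hw.map _)
  rw [hμ.maximalIdeal_eq, Ideal.mem_span_singleton] at hw
  obtain ⟨y, rfl⟩ := hw
  refine mem_nilradical.mpr ⟨n, ?_⟩
  rw [← map_pow, Ideal.Quotient.eq_zero_iff_mem, mul_pow, Ideal.mem_span_singleton]
  exact dvd_mul_right _ _

open Classical in
theorem encard_isoSet_map_quotient_le {p : ℕ} [hp : Fact p.Prime] [CharP W p]
    (hμ : Irreducible μ) (hn : n ≠ 0) {e r : ℕ} (he : 0 < e) (hr : 0 < r) (t : W) (g g' : ℕ → W)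
    {δ : ℕ → ℕ} {δr : ℕ}
    (hδ : ∑ i ∈ Icc 1 (r - 1), δ i * ((p ^ e) ^ i - 1) = δr * ((p ^ e) ^ r - 1)) :
    (IsoSet (p ^ e) ((drinfeldPoly (p ^ e) r t g).map (Ideal.Quotient.mk (Ideal.span {μ ^ n})))
        ((drinfeldPoly (p ^ e) r t g').map (Ideal.Quotient.mk (Ideal.span {μ ^ n})))).encard ≤
      if μ ^ n ∣ ∏ i ∈ Icc 1 (r - 1), g i ^ δ i - ∏ i ∈ Icc 1 (r - 1), g' i ^ δ i
      then (((p ^ e) ^ r - 1 : ℕ) : ℕ∞) else 0 := by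
  have := isLocalRing_quotient_span_pow hμ hn
  have : CharP (W ⧸ Ideal.span {μ ^ n}) p := (CharP.charP_iff_prime_eq_zero hp.out).mpr <| by
    rw [← map_natCast (Ideal.Quotient.mk _), CharP.cast_eq_zero, map_zero]
  have hnil := maximalIdeal_quotient_span_pow_le_nilradical hμ (n := n)
  rw [map_drinfeldPoly, map_drinfeldPoly]
  split_ifs with hdvd
  · exact encard_isoSet_drinfeldPoly_le hnil he hr
  refine (Set.encard_eq_zero.mpr (Set.eq_empty_of_forall_notMem fun u hu => hdvd ?_)).le
  rw [← Ideal.mem_span_singleton, ← Ideal.Quotient.eq_zero_iff_mem, map_sub, sub_eq_zero]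
  simpa only [map_prod, map_pow, Function.comp_apply] using
    prod_pow_eq_of_mem_isoSet hnil he hr hu hδ

theorem natCast_le_of_pow_dvd {ν : W → ℕ∞} (hν0 : ν 0 = ⊤)
    (hν : ∀ (m : ℕ) (w : W), IsUnit w → ν (μ ^ m * w) = m) (hμ : Irreducible μ) {x : W}
    (h : μ ^ n ∣ x) : (n : ℕ∞) ≤ ν x := by
  rcases eq_or_ne x 0 with rfl | hx
  · simp [hν0]
  obtain ⟨M, w, rfl⟩ := IsDiscreteValuationRing.eq_unit_mul_pow_irreducible hx hμ
  rw [mul_comm, hν M w w.isUnit, Nat.cast_le, ← pow_dvd_pow_iff hμ.ne_zero hμ.not_isUnit]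
  exact Units.dvd_mul_left.mp h

end DVR

theorem stmt6_general (p : ℕ) (hp : p.Prime) (e : ℕ) (he : 0 < e) (q : ℕ) (hq : q = p ^ e)
    (W : Type*) [CommRing W] [IsDomain W] [IsDiscreteValuationRing W] [CharP W p]
    (μ : W) (hμ : Irreducible μ)
    (ν : W → ℕ∞) (hν0 : ν 0 = ⊤)
    (hν : ∀ (m : ℕ) (w : W), IsUnit w → ν (μ ^ m * w) = m)
    (r : ℕ) (hr : 2 ≤ r) (t : W) (g g' : ℕ → W)
    (φ φ' : Polynomial W)
    (hφ : φ = C t * X + (∑ i ∈ Finset.Icc 1 (r - 1), C (g i) * X ^ q ^ i) + X ^ q ^ r)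
    (hφ' : φ' = C t * X + (∑ i ∈ Finset.Icc 1 (r - 1), C (g' i) * X ^ q ^ i) + X ^ q ^ r)
    (δ : ℕ → ℕ) (δr : ℕ)
    (hδ : (∑ i ∈ Finset.Icc 1 (r - 1), δ i * (q ^ i - 1)) = δr * (q ^ r - 1)) :
    ((q ^ r - 1 : ℕ) : ℕ∞) *
        ν ((∏ i ∈ Finset.Icc 1 (r - 1), g i ^ δ i)
            - ∏ i ∈ Finset.Icc 1 (r - 1), g' i ^ δ i) ≥
      ⨆ N : ℕ, ∑ n ∈ Finset.Icc 1 N,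
        (IsoSet q (φ.map (Ideal.Quotient.mk (Ideal.span {μ ^ n})))
          (φ'.map (Ideal.Quotient.mk (Ideal.span {μ ^ n})))).encard := by
  classical
  have : Fact p.Prime := ⟨hp⟩
  subst hq hφ hφ'
  set D := ∏ i ∈ Icc 1 (r - 1), g i ^ δ i - ∏ i ∈ Icc 1 (r - 1), g' i ^ δ i
  refine iSup_le fun N => ?_
  calc _ ≤ ∑ n ∈ Icc 1 N, if μ ^ n ∣ D then (((p ^ e) ^ r - 1 : ℕ) : ℕ∞) else 0 :=
        sum_le_sum fun n hn => encard_isoSet_map_quotient_le hμ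
          (by rw [mem_Icc] at hn; omega) he (by omega) t g g' hδ
    _ = ((p ^ e) ^ r - 1 : ℕ) * ((Icc 1 N).filter (μ ^ · ∣ D)).card := by
        rw [← sum_filter, sum_const, nsmul_eq_mul, mul_comm]
    _ ≤ _ := mul_le_mul_right (card_filter_Icc_le (fun _ => natCast_le_of_pow_dvd hν0 hν hμ) N) _

open Polynomial in
/-- Proposition 3.9 of the paper, in normalized form: the valuation of the difference of
basic `J`-invariants of `φ` and `φ'` is bounded below in terms of the number of
isomorphisms `φ ≅ φ'` modulo `μ^n`. -/
theorem stmt6 (p : ℕ) (hp : p.Prime) (e : ℕ) (he : 0 < e) (q : ℕ) (hq : q = p ^ e)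
    (W : Type*) [CommRing W] [IsDomain W] [IsDiscreteValuationRing W] [CharP W p]
    [IsAdicComplete (IsLocalRing.maximalIdeal W) W]
    [IsAlgClosed (IsLocalRing.ResidueField W)]
    (μ : W) (hμ : Irreducible μ)
    (ν : W → ℕ∞) (hν0 : ν 0 = ⊤)
    (hν : ∀ (m : ℕ) (w : W), IsUnit w → ν (μ ^ m * w) = m)
    (r : ℕ) (hr : 2 ≤ r) (t : W) (g g' : ℕ → W)
    (φ φ' : Polynomial W)
    (hφ : φ = C t * X + (∑ i ∈ Finset.Icc 1 (r - 1), C (g i) * X ^ q ^ i) + X ^ q ^ r)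
    (hφ' : φ' = C t * X + (∑ i ∈ Finset.Icc 1 (r - 1), C (g' i) * X ^ q ^ i) + X ^ q ^ r)
    (δ : ℕ → ℕ) (δr : ℕ) (hδr : 0 < δr)
    (hδ : (∑ i ∈ Finset.Icc 1 (r - 1), δ i * (q ^ i - 1)) = δr * (q ^ r - 1)) :
    ((q ^ r - 1 : ℕ) : ℕ∞) *
        ν ((∏ i ∈ Finset.Icc 1 (r - 1), g i ^ δ i)
            - ∏ i ∈ Finset.Icc 1 (r - 1), g' i ^ δ i) ≥
      ⨆ N : ℕ, ∑ n ∈ Finset.Icc 1 N,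
        (IsoSet q (φ.map (Ideal.Quotient.mk (Ideal.span {μ ^ n})))
          (φ'.map (Ideal.Quotient.mk (Ideal.span {μ ^ n})))).encard :=
  stmt6_general p hp e he q hq W μ hμ ν hν0 hν r hr t g g' φ φ' hφ hφ' δ δr hδ
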